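/- arXiv:1702.01286 — 4 statements merged into one kernel-verified Lean document; each statement's English description precedes it below -/
import Mathlib

section
/- There exists an absolute constant C ≥ 0 such that for every power of two n, every power of two B' with 2 ≤ B' ≤ n/2, every even integer F ≥ 2, and every real λ > 1: Σ_{f∈[n], |f| ≥ λn/(2B')} Ŵ_f ≤ (C/λ)^{F−1} · Σ_{f∈[n]} Ŵ_f. -/
open Finset

/-- Circular (modulo-`n`) distance of an index to `0`. -/
def cdist (n : ℕ) (x : ZMod n) : ℕ := min x.val (n - x.val)

/-- `Ŵ_f = ((1/(B'-1)) ∑_{f' ∈ ℤ, |f'| < B'/2} e^{2πi f f'/n})^F`, the `F`-fold power of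
the normalized Dirichlet kernel of width `B' - 1` (the inner sum is real). -/
noncomputable def What (n B' F : ℕ) (f : ZMod n) : ℝ :=
  (((B' : ℝ) - 1)⁻¹ *
    (∑ f' ∈ Finset.Ioo (-((B' : ℤ) / 2)) ((B' : ℤ) / 2),
      Complex.exp (2 * Real.pi * Complex.I * (f.val : ℂ) * (f' : ℂ) / (n : ℂ))).re) ^ F

/-!
For `f ≠ 0` the kernel is a geometric sum of unimodular terms, so its modulus is at most
`1 / sin (π f / n) ≤ n / (2 |f|)` (Jordan's inequality), whence `Ŵ_f ≤ (n / (B' |f|))^F`.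
Each circular distance `d` is attained by at most two residues, and `∑_{d > k} d⁻² ≤ 2 / (k + 1)`,
so the tail `|f| ≥ r` is at most `4 (n / B') (n / (B' r))^(F-1)`; for `r = λn/(2B')` this is
`4 (n / B') (2 / λ)^(F-1)`. On the other hand, when `4 B' |f| ≤ n` every phase of the kernel lies
within `π/3` of `0`, so `Ŵ_f ≥ 2^(-F)` for at least `n / (4B')` residues. Comparing the two
bounds gives the theorem with `C = 128`.
-/

open Real

lemma sum_comp_le_mul_sum_of_card_fiber_le {α β R : Type*} [DecidableEq β] [Semiring R]
    [PartialOrder R] [IsOrderedRing R] {s : Finset α} {t : Finset β} {g : α → β} {h : β → R}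
    {k : ℕ} (hst : ∀ a ∈ s, g a ∈ t) (hfib : ∀ b ∈ t, #{a ∈ s | g a = b} ≤ k)
    (hh : ∀ b ∈ t, 0 ≤ h b) : ∑ a ∈ s, h (g a) ≤ k * ∑ b ∈ t, h b := by
  rw [← sum_fiberwise_of_maps_to hst, mul_sum]
  refine sum_le_sum fun b hb => ?_
  rw [sum_congr rfl fun a ha => by rw [(mem_filter.mp ha).2], sum_const, nsmul_eq_mul]
  exact mul_le_mul_of_nonneg_right (Nat.mono_cast (hfib b hb)) (hh b hb)

lemma cdist_zero (n : ℕ) : cdist n 0 = 0 := by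
  simp [cdist]

lemma cdist_pos {n : ℕ} [NeZero n] {f : ZMod n} (hf : f ≠ 0) : 0 < cdist n f := by
  have := ZMod.val_lt f
  have := (ZMod.val_ne_zero f).mpr hf
  unfold cdist
  omega

lemma cdist_lt (n : ℕ) [NeZero n] (f : ZMod n) : cdist n f < n := by
  have := ZMod.val_lt f
  unfold cdist
  omega

lemma card_filter_cdist_eq_le_two (n : ℕ) [NeZero n] (s : Finset (ZMod n)) (d : ℕ) :
    #{f ∈ s | cdist n f = d} ≤ 2 := by
  have hsub : {f ∈ s | cdist n f = d} ⊆ {(d : ZMod n), ((n - d : ℕ) : ZMod n)} := by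
    intro f hf
    have hval : f.val = d ∨ f.val = n - d := by
      have := (mem_filter.mp hf).2
      have := ZMod.val_lt f
      unfold cdist at *
      omega
    rw [mem_insert, mem_singleton, ← ZMod.natCast_zmod_val f]
    rcases hval with h | h <;> simp [h]
  exact (card_le_card hsub).trans card_le_two

lemma Ioo_neg_natCast_eq_image_range (m : ℕ) (hm : 1 ≤ m) :
    (range (2 * m - 1)).image (fun i : ℕ => (i : ℤ) - (m - 1)) = Ioo (-(m : ℤ)) m := by
  ext j
  simp only [mem_image, mem_range, mem_Ioo]
  constructor
  · rintro ⟨i, hi, rfl⟩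
    omega
  · rintro ⟨h₁, h₂⟩
    exact ⟨(j + (m - 1)).toNat, by omega, by omega⟩

lemma sum_zpow_Ioo_neg_natCast {K : Type*} [DivisionRing K] {z : K} (hz : z ≠ 0) (m : ℕ)
    (hm : 1 ≤ m) :
    ∑ j ∈ Ioo (-(m : ℤ)) m, z ^ j = z ^ (-((m : ℤ) - 1)) * ∑ i ∈ range (2 * m - 1), z ^ i := by
  rw [← Ioo_neg_natCast_eq_image_range m hm, sum_image fun a _ b _ h => by simpa using h,
    mul_sum]
  refine sum_congr rfl fun i _ => ?_
  rw [zpow_sub₀ hz, div_eq_mul_inv, ← zpow_neg, ← zpow_natCast]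
  exact (Commute.zpow_zpow_self₀ z _ _).eq

lemma norm_sum_zpow_Ioo_neg_natCast_le {K : Type*} [NormedField K] {z : K} (hz : ‖z‖ = 1)
    (hz₁ : z ≠ 1) (m : ℕ) (hm : 1 ≤ m) :
    ‖∑ j ∈ Ioo (-(m : ℤ)) m, z ^ j‖ ≤ 2 / ‖z - 1‖ := by
  have hz₀ : z ≠ 0 := norm_ne_zero_iff.mp (by rw [hz]; exact one_ne_zero)
  rw [sum_zpow_Ioo_neg_natCast hz₀ m hm, geom_sum_eq hz₁, norm_mul, norm_zpow, hz, one_zpow,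
    one_mul, norm_div]
  gcongr
  calc ‖z ^ (2 * m - 1) - 1‖ ≤ ‖z ^ (2 * m - 1)‖ + ‖(1 : K)‖ := norm_sub_le _ _
    _ = 2 := by rw [norm_pow, hz, one_pow, norm_one]; norm_num

lemma two_div_pi_mul_min_le_sin {x : ℝ} (h₀ : 0 ≤ x) (hπ : x ≤ π) :
    2 / π * min x (π - x) ≤ sin x := by
  rcases le_total x (π / 2) with hx | hx
  · rw [min_eq_left (by linarith)]
    exact mul_le_sin h₀ hx
  · rw [min_eq_right (by linarith), ← sin_pi_sub]
    exact mul_le_sin (by linarith) (by linarith)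

lemma two_mul_cdist_div_le_sin {n : ℕ} [NeZero n] (f : ZMod n) :
    2 * cdist n f / n ≤ sin (π * f.val / n) := by
  have hn : (0 : ℝ) < n := Nat.cast_pos.mpr (NeZero.pos n)
  have hv : (f.val : ℝ) ≤ n := by exact_mod_cast (ZMod.val_lt f).le
  have hmin : min (π * f.val / n) (π - π * f.val / n) = π / n * cdist n f := by
    rw [cdist, Nat.cast_min, Nat.cast_sub (ZMod.val_lt f).le, mul_min_of_nonneg _ _ (by positivity)]
    congr 1 <;> field_simp
  calc 2 * (cdist n f : ℝ) / n = 2 / π * (π / n * cdist n f) := by field_simp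
    _ ≤ sin (π * f.val / n) := by
      rw [← hmin]
      refine two_div_pi_mul_min_le_sin (by positivity) ?_
      rw [div_le_iff₀ hn]
      exact mul_le_mul_of_nonneg_left hv pi_pos.le

noncomputable def dirichletKernel (n B' : ℕ) (f : ZMod n) : ℝ :=
  ((B' : ℝ) - 1)⁻¹ *
    (∑ f' ∈ Ioo (-((B' : ℤ) / 2)) ((B' : ℤ) / 2),
      Complex.exp (2 * π * Complex.I * (f.val : ℂ) * (f' : ℂ) / (n : ℂ))).re

lemma What_eq_dirichletKernel_pow (n B' F : ℕ) (f : ZMod n) :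
    What n B' F f = dirichletKernel n B' f ^ F := rfl

lemma exp_two_pi_I_mul_div_eq_zpow (n v : ℕ) (j : ℤ) :
    Complex.exp (2 * π * Complex.I * v * j / n) =
      Complex.exp (Complex.I * (2 * π * v / n : ℝ)) ^ j := by
  rw [← Complex.exp_int_mul]
  push_cast
  ring_nf

lemma re_exp_two_pi_I_mul_div (n v : ℕ) (j : ℤ) :
    (Complex.exp (2 * π * Complex.I * v * j / n)).re = cos (2 * π * v * j / n) := by
  rw [← Complex.exp_ofReal_mul_I_re]
  push_cast
  ring_nf

lemma abs_dirichletKernel_le {n B' : ℕ} [NeZero n] (hB : Even B') (hB₂ : 2 ≤ B') {f : ZMod n}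
    (hf : f ≠ 0) : |dirichletKernel n B' f| ≤ n / (B' * cdist n f) := by
  obtain ⟨m, rfl⟩ := hB
  have hm : (((m + m : ℕ) : ℤ) / 2) = m := by omega
  have hn : (0 : ℝ) < n := Nat.cast_pos.mpr (NeZero.pos n)
  have hd : (0 : ℝ) < cdist n f := by exact_mod_cast cdist_pos hf
  set z := Complex.exp (Complex.I * (2 * π * f.val / n : ℝ))
  have hsin : 2 * cdist n f / n ≤ sin (π * f.val / n) := two_mul_cdist_div_le_sin f
  have hsin₀ : 0 < sin (π * f.val / n) := lt_of_lt_of_le (by positivity) hsin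
  have hz₁ : ‖z - 1‖ = 2 * sin (π * f.val / n) := by
    rw [Complex.norm_exp_I_mul_ofReal_sub_one, show 2 * π * f.val / n / 2 = π * f.val / n by ring,
      norm_mul, Real.norm_of_nonneg hsin₀.le]
    norm_num
  have hS : ‖∑ j ∈ Ioo (-(m : ℤ)) m, z ^ j‖ ≤ n / (2 * cdist n f) :=
    calc _ ≤ 2 / ‖z - 1‖ :=
          norm_sum_zpow_Ioo_neg_natCast_le (Complex.norm_exp_I_mul_ofReal _)
            (sub_ne_zero.mp <| norm_ne_zero_iff.mp <| by rw [hz₁]; positivity) m (by omega)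
      _ ≤ n / (2 * cdist n f) := by
          rw [hz₁, div_le_div_iff₀ (by positivity) (by positivity)]
          nlinarith [(div_le_iff₀ hn).mp hsin]
  have hB : (0 : ℝ) < ((m + m : ℕ) : ℝ) - 1 := by
    have : (2 : ℝ) ≤ ((m + m : ℕ) : ℝ) := by exact_mod_cast hB₂
    linarith
  rw [dirichletKernel, hm, abs_mul, abs_inv, abs_of_pos hB]
  simp only [exp_two_pi_I_mul_div_eq_zpow]
  calc _ ≤ (((m + m : ℕ) : ℝ) - 1)⁻¹ * (n / (2 * cdist n f)) := by
        gcongr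
        exact (Complex.abs_re_le_norm _).trans hS
    _ ≤ 2 / ((m + m : ℕ) : ℝ) * (n / (2 * cdist n f)) := by
        gcongr
        rw [inv_eq_one_div, div_le_div_iff₀ hB (by positivity)]
        push_cast
        linarith [show (1 : ℝ) ≤ m by norm_cast; omega]
    _ = n / ((m + m : ℕ) * cdist n f) := by field_simp

lemma half_le_dirichletKernel {n B' : ℕ} (hB : Even B') (hB₂ : 2 ≤ B') {f : ZMod n}
    (hf : 4 * B' * f.val ≤ n) : 1 / 2 ≤ dirichletKernel n B' f := by
  obtain ⟨m, rfl⟩ := hB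
  have hm : (((m + m : ℕ) : ℤ) / 2) = m := by omega
  have hcos : ∀ j ∈ Ioo (-(m : ℤ)) m, 1 / 2 ≤ cos (2 * π * f.val * j / n) := by
    intro j hj
    rw [mem_Ioo] at hj
    have hj' : |(j : ℝ)| ≤ m := by
      rw [abs_le]
      constructor <;> exact_mod_cast (by omega)
    have hf' : 8 * (m * f.val : ℝ) ≤ n := by
      rw [← Nat.cast_le (α := ℝ)] at hf
      push_cast at hf
      linarith
    rw [← cos_abs (2 * π * f.val * j / n), ← cos_pi_div_three]
    refine cos_le_cos_of_nonneg_of_le_pi (abs_nonneg _) (by linarith [pi_pos]) ?_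
    rw [abs_div, abs_mul, Nat.abs_cast, abs_of_nonneg (by positivity : 0 ≤ 2 * π * f.val)]
    rcases (Nat.cast_nonneg (α := ℝ) n).eq_or_lt with hn | hn
    · rw [← hn, div_zero]
      positivity
    rw [div_le_iff₀ hn]
    calc 2 * π * f.val * |(j : ℝ)| ≤ 2 * π * f.val * m := by gcongr
      _ ≤ π / 3 * n := by nlinarith [mul_le_mul_of_nonneg_left hf' pi_pos.le, pi_pos]
  have hcard : ((Ioo (-(m : ℤ)) m).card : ℝ) = ((m + m : ℕ) : ℝ) - 1 := by
    rw [Int.card_Ioo, show (m - -(m : ℤ) - 1).toNat = m + m - 1 by omega,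
      Nat.cast_sub (by omega), Nat.cast_one]
  have hsum : (((m + m : ℕ) : ℝ) - 1) * (1 / 2) ≤
      ∑ j ∈ Ioo (-(m : ℤ)) m, cos (2 * π * f.val * j / n) := by
    rw [← hcard, ← nsmul_eq_mul]
    exact card_nsmul_le_sum _ _ _ hcos
  have hB : (0 : ℝ) < ((m + m : ℕ) : ℝ) - 1 := by
    have : (2 : ℝ) ≤ ((m + m : ℕ) : ℝ) := by exact_mod_cast hB₂
    linarith
  rw [dirichletKernel, hm, Complex.re_sum]
  simp only [re_exp_two_pi_I_mul_div]
  calc (1 / 2 : ℝ) = (((m + m : ℕ) : ℝ) - 1)⁻¹ * ((((m + m : ℕ) : ℝ) - 1) * (1 / 2)) := by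
        field_simp
    _ ≤ _ := by gcongr

lemma div_mul_half_pow_le_sum_What {n B' : ℕ} [NeZero n] (hB : Even B') (hB₂ : 2 ≤ B') {F : ℕ}
    (hF : Even F) : n / (4 * B') * (1 / 2) ^ F ≤ ∑ f : ZMod n, What n B' F f := by
  set M := n / (4 * B')
  have hsmall : ∀ v ∈ range (M + 1), 4 * B' * v ≤ n := fun v hv =>
    (Nat.mul_le_mul_left _ (Nat.lt_succ_iff.mp (mem_range.mp hv))).trans (Nat.mul_div_le n _)
  have hval : ∀ v ∈ range (M + 1), ((v : ZMod n)).val = v := fun v hv =>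
    ZMod.val_cast_of_lt <| by nlinarith [hsmall v hv, NeZero.pos n]
  have hlow : ∀ v ∈ range (M + 1), (1 / 2 : ℝ) ^ F ≤ What n B' F v := fun v hv =>
    pow_le_pow_left₀ (by norm_num)
      (half_le_dirichletKernel hB hB₂ ((hval v hv).symm ▸ hsmall v hv)) F
  have hM : (n : ℝ) / (4 * B') ≤ M + 1 := by
    have := Nat.lt_floor_add_one ((n : ℝ) / (4 * B'))
    rw [show (4 * B' : ℝ) = ((4 * B' : ℕ) : ℝ) by push_cast; ring, Nat.floor_div_eq_div] at this
    push_cast at this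
    exact this.le
  calc n / (4 * B') * (1 / 2) ^ F ≤ (M + 1) * (1 / 2 : ℝ) ^ F := by gcongr
    _ ≤ ∑ v ∈ range (M + 1), What n B' F v := by
        simpa using card_nsmul_le_sum _ _ _ hlow
    _ = ∑ f ∈ (range (M + 1)).image (Nat.cast : ℕ → ZMod n), What n B' F f :=
        (sum_image fun a ha b hb h => by rw [← hval a ha, ← hval b hb, h]).symm
    _ ≤ ∑ f : ZMod n, What n B' F f :=
        sum_le_univ_sum_of_nonneg fun f => hF.pow_nonneg _

lemma What_le_of_ne_zero {n B' : ℕ} [NeZero n] (hB : Even B') (hB₂ : 2 ≤ B') {F : ℕ}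
    (hF : Even F) {f : ZMod n} (hf : f ≠ 0) :
    What n B' F f ≤ (n / (B' * cdist n f)) ^ F := by
  rw [What_eq_dirichletKernel_pow, ← hF.pow_abs]
  exact pow_le_pow_left₀ (abs_nonneg _) (abs_dirichletKernel_le hB hB₂ hf) F

lemma sum_What_tail_le {n B' : ℕ} [NeZero n] (hB : Even B') (hB₂ : 2 ≤ B') {F : ℕ}
    (hF : Even F) (hF₂ : 2 ≤ F) {r : ℝ} (hr : 0 < r) :
    ∑ f ∈ univ.filter (fun f : ZMod n => r ≤ cdist n f), What n B' F f ≤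
      4 * (n / B') * (n / (B' * r)) ^ (F - 1) := by
  obtain ⟨K, rfl⟩ : ∃ K, F = K + 2 := ⟨F - 2, by omega⟩
  obtain ⟨k, hkr⟩ : ∃ k, k + 1 = ⌈r⌉₊ := ⟨⌈r⌉₊ - 1, by have := Nat.ceil_pos.mpr hr; omega⟩
  have hk : r ≤ k + 1 := by exact_mod_cast hkr ▸ Nat.le_ceil r
  have hterm : ∀ d ∈ Ioo k n, ((n : ℝ) / (B' * d)) ^ (K + 2) ≤
      (n / (B' * r)) ^ K * (n / B') ^ 2 * ((d : ℝ) ^ 2)⁻¹ := by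
    intro d hd
    have hrd : r ≤ d := hk.trans (by exact_mod_cast (mem_Ioo.mp hd).1)
    calc ((n : ℝ) / (B' * d)) ^ (K + 2)
        = ((n : ℝ) / (B' * d)) ^ K * ((n / B') ^ 2 * ((d : ℝ) ^ 2)⁻¹) := by
          rw [pow_add, div_mul_eq_div_div]
          ring
      _ ≤ ((n : ℝ) / (B' * r)) ^ K * ((n / B') ^ 2 * ((d : ℝ) ^ 2)⁻¹) := by gcongr
      _ = _ := (mul_assoc _ _ _).symm
  calc ∑ f ∈ univ.filter (fun f : ZMod n => r ≤ cdist n f), What n B' (K + 2) f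
      ≤ ∑ f ∈ univ.filter (fun f : ZMod n => r ≤ cdist n f),
          ((n : ℝ) / (B' * cdist n f)) ^ (K + 2) :=
        sum_le_sum fun f hf => What_le_of_ne_zero hB hB₂ hF fun h0 => by
          have := (mem_filter.mp hf).2
          simp only [h0, cdist_zero, CharP.cast_eq_zero] at this
          linarith
    _ ≤ 2 * ∑ d ∈ Ioo k n, ((n : ℝ) / (B' * d)) ^ (K + 2) := by
        have hmaps : ∀ f ∈ univ.filter (fun f : ZMod n => r ≤ cdist n f), cdist n f ∈ Ioo k n :=
          fun f hf => mem_Ioo.mpr ⟨by have := Nat.ceil_le.mpr (mem_filter.mp hf).2; omega,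
            cdist_lt n f⟩
        exact_mod_cast sum_comp_le_mul_sum_of_card_fiber_le
          (h := fun d : ℕ => ((n : ℝ) / (B' * d)) ^ (K + 2)) hmaps
          (fun d _ => card_filter_cdist_eq_le_two n _ d) (fun d _ => by positivity)
    _ ≤ 2 * ∑ d ∈ Ioo k n, (n / (B' * r)) ^ K * (n / B') ^ 2 * ((d : ℝ) ^ 2)⁻¹ := by
        gcongr with d hd
        exact hterm d hd
    _ = 2 * ((n / (B' * r)) ^ K * (n / B') ^ 2) * ∑ d ∈ Ioo k n, ((d : ℝ) ^ 2)⁻¹ := by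
        rw [mul_sum, mul_sum]
        exact sum_congr rfl fun _ _ => by ring
    _ ≤ 2 * ((n / (B' * r)) ^ K * (n / B') ^ 2) * (2 / r) := by
        gcongr
        exact (sum_Ioo_inv_sq_le k n).trans (div_le_div_of_nonneg_left zero_le_two hr hk)
    _ = 4 * (n / B') * (n / (B' * r)) ^ (K + 2 - 1) := by
        rw [show K + 2 - 1 = K + 1 by omega, div_mul_eq_div_div]
        ring

/-- There is an absolute constant `C ≥ 0` such that for every `λ > 1`,
`∑_{f ∈ [n], |f| ≥ λn/(2B')} Ŵ_f ≤ (C/λ)^{F-1} ∑_{f ∈ [n]} Ŵ_f`. -/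
theorem What_tail_bound :
    ∃ C : ℝ, 0 ≤ C ∧
      ∀ (n B' F : ℕ) [NeZero n], (∃ k, n = 2 ^ k) → (∃ k, B' = 2 ^ k) →
        2 ≤ B' → 2 * B' ≤ n → 2 ≤ F → Even F →
        ∀ lam : ℝ, 1 < lam →
          ∑ f ∈ Finset.univ.filter
              (fun f : ZMod n => lam * n / (2 * B') ≤ (cdist n f : ℝ)), What n B' F f ≤
            (C / lam) ^ (F - 1) * ∑ f : ZMod n, What n B' F f := by
  refine ⟨128, by norm_num, fun n B' F _ _ hBpow hB₂ _ hF₂ hF lam hlam => ?_⟩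
  have hB : Even B' := by
    obtain ⟨k, rfl⟩ := hBpow
    exact (Nat.even_pow' fun hk => by simp [hk] at hB₂).mpr even_two
  have hn : (0 : ℝ) < n := Nat.cast_pos.mpr (NeZero.pos n)
  have hB₀ : (0 : ℝ) < B' := Nat.cast_pos.mpr (by omega)
  have hlam₀ : 0 < lam := by linarith
  have htail := sum_What_tail_le (n := n) hB hB₂ hF hF₂ (r := lam * n / (2 * B')) (by positivity)
  rw [show (n : ℝ) / (B' * (lam * n / (2 * B'))) = 2 / lam by field_simp] at htail
  obtain ⟨K, rfl⟩ : ∃ K, F = K + 2 := ⟨F - 2, by omega⟩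
  rw [show K + 2 - 1 = K + 1 by omega] at htail ⊢
  calc _ ≤ 4 * (n / B') * (2 / lam) ^ (K + 1) := htail
    _ = n / B' / 8 * 32 * (2 / lam) ^ (K + 1) := by ring
    _ ≤ n / B' / 8 * 32 ^ (K + 1) * (2 / lam) ^ (K + 1) := by
        gcongr
        exact le_self_pow₀ (by norm_num) (by omega)
    _ = (128 / lam) ^ (K + 1) * (n / (4 * B') * (1 / 2) ^ (K + 2)) := by
        rw [show (128 : ℝ) / lam = 2 * (32 * (2 / lam)) by ring, mul_pow, mul_pow, one_div_pow]
        field_simp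
        ring
    _ ≤ _ := by gcongr; exact div_mul_half_pow_le_sum_What hB hB₂ hF
end

section
/- With Ŵ as defined, for every f ∈ [n] with |f| ≤ n/(2B') one has Ŵ_f ≥ (2/π)^F. -/
open Finset

/-
As `B'` is even, `|f'| < B'/2` ranges over exactly `B' - 1` integers, and the normalized inner
sum is the Dirichlet kernel `D(θ) = sin((B'-1)θ) / ((B'-1) sin θ)` at `θ = π|f|/n`, so
`|f| ≤ n/(2B')` gives `(B'-1)θ ≤ π/2`.  There Jordan's inequality `sin t ≥ 2t/π` bounds the
numerator below by `2(B'-1)θ/π`, while `sin θ ≤ θ` bounds the denominator above by `(B'-1)θ`;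
hence `D(θ) ≥ 2/π`, and raising to the `F`-th power preserves this.
-/

open Real

lemma sin_mul_sum_cos_Ioo (M : ℕ) (hM : 1 ≤ M) (θ : ℝ) :
    sin θ * ∑ j ∈ Ioo (-(M : ℤ)) M, cos (2 * θ * j) = sin ((2 * M - 1) * θ) := by
  induction M, hM using Nat.le_induction with
  | base =>
    rw [show Ioo (-((1 : ℕ) : ℤ)) ((1 : ℕ) : ℤ) = {0} by decide]
    norm_num
  | succ M hM ih =>
    have hIoo : Ioo (-((M + 1 : ℕ) : ℤ)) ((M + 1 : ℕ) : ℤ)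
        = insert (-(M : ℤ)) (insert (M : ℤ) (Ioo (-(M : ℤ)) M)) := by
      ext j
      simp only [mem_Ioo, mem_insert]
      omega
    rw [hIoo, sum_insert (by simp only [mem_insert, mem_Ioo]; omega),
      sum_insert (by simp), Int.cast_neg, mul_neg, cos_neg, Int.cast_natCast]
    have hstep : sin ((2 * (M + 1) - 1) * θ) - sin ((2 * M - 1) * θ)
        = 2 * sin θ * cos (2 * θ * M) := by
      rw [sin_sub_sin]
      ring_nf
    push_cast
    linear_combination ih - hstep

lemma two_div_pi_mul_le_sum_cos_Ioo (M : ℕ) (hM : 1 ≤ M) {θ : ℝ} (hθ₀ : 0 ≤ θ)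
    (hθ : (2 * M - 1) * θ ≤ π / 2) :
    2 / π * (2 * M - 1) ≤ ∑ j ∈ Ioo (-(M : ℤ)) M, cos (2 * θ * j) := by
  have hM' : (1 : ℝ) ≤ M := by exact_mod_cast hM
  rcases hθ₀.eq_or_lt with rfl | hθpos
  · have hcard : ((Ioo (-(M : ℤ)) M).card : ℝ) = 2 * M - 1 := by
      rw [show (Ioo (-(M : ℤ)) M).card = 2 * M - 1 by rw [Int.card_Ioo]; omega,
        Nat.cast_sub (by omega)]
      push_cast
      ring
    simp only [mul_zero, zero_mul, cos_zero, sum_const, nsmul_eq_mul, mul_one, hcard]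
    exact mul_le_of_le_one_left (by linarith) (div_le_one_of_le₀ two_le_pi pi_pos.le)
  · have hθπ : θ < π := by nlinarith [pi_pos]
    have hsin : 0 < sin θ := sin_pos_of_pos_of_lt_pi hθpos hθπ
    refine le_of_mul_le_mul_left ?_ hsin
    rw [sin_mul_sum_cos_Ioo M hM θ]
    calc sin θ * (2 / π * (2 * M - 1)) ≤ θ * (2 / π * (2 * M - 1)) := by
          gcongr
          · exact mul_nonneg (div_nonneg zero_le_two pi_pos.le) (by linarith)
          · exact sin_le hθ₀
      _ = 2 / π * ((2 * M - 1) * θ) := by ring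
      _ ≤ sin ((2 * M - 1) * θ) := mul_le_sin (mul_nonneg (by linarith) hθ₀) hθ

lemma cos_two_pi_val_mul_div_eq_cdist {n : ℕ} [NeZero n] (f : ZMod n) (j : ℤ) :
    cos (2 * π * f.val * j / n) = cos (2 * (π * cdist n f / n) * j) := by
  have hn : (n : ℝ) ≠ 0 := NeZero.ne _
  rcases min_choice f.val (n - f.val) with h | h <;> rw [cdist, h]
  · ring_nf
  · rw [Nat.cast_sub (ZMod.val_le f), ← cos_int_mul_two_pi_sub]
    congr 1
    field_simp

lemma What_two_mul_eq {n : ℕ} [NeZero n] (M F : ℕ) (f : ZMod n) :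
    What n (2 * M) F f
      = ((2 * M - 1 : ℝ)⁻¹ * ∑ j ∈ Ioo (-(M : ℤ)) M, cos (2 * (π * cdist n f / n) * j)) ^ F := by
  have hhalf : ((2 * M : ℕ) : ℤ) / 2 = M := by omega
  rw [What, hhalf, Complex.re_sum]
  push_cast
  congr 2
  refine sum_congr rfl fun j _ => ?_
  rw [← cos_two_pi_val_mul_div_eq_cdist, ← Complex.exp_ofReal_mul_I_re]
  push_cast
  ring_nf

theorem What_pass_lower_general (n B' F : ℕ) [NeZero n]
    (hB' : ∃ k, B' = 2 ^ k)
    (hB2 : 2 ≤ B')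
    (f : ZMod n) (hf : (cdist n f : ℝ) ≤ (n : ℝ) / (2 * B')) :
    (2 / Real.pi) ^ F ≤ What n B' F f := by
  obtain ⟨k, rfl⟩ := hB'
  obtain ⟨M, hM⟩ : Even (2 ^ k) := Nat.even_pow.mpr ⟨even_two, by rintro rfl; simp at hB2⟩
  rw [hM, ← two_mul] at hf hB2 ⊢
  have hM1 : 1 ≤ M := by omega
  have hM1' : (1 : ℝ) ≤ M := by exact_mod_cast hM1
  have hn : (0 : ℝ) < n := by exact_mod_cast NeZero.pos n
  set θ := π * cdist n f / n with hθdef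
  have hθ : (2 * M - 1) * θ ≤ π / 2 := by
    have : (2 * M) * θ ≤ π / 2 := by
      rw [le_div_iff₀ (by positivity)] at hf
      calc (2 * M) * θ = π / 2 * (cdist n f * (2 * (2 * M : ℕ)) / n) := by
            rw [hθdef]
            push_cast
            field_simp
        _ ≤ π / 2 * 1 := by gcongr; exact div_le_one_of_le₀ hf hn.le
        _ = π / 2 := mul_one _
    nlinarith [show 0 ≤ θ by positivity]
  rw [What_two_mul_eq]
  gcongr
  rw [le_inv_mul_iff₀ (by linarith)]
  simpa only [mul_comm] using two_div_pi_mul_le_sum_cos_Ioo M hM1 (by positivity) hθ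

/-- For every `f ∈ [n]` with `|f| ≤ n/(2B')`, `Ŵ_f ≥ (2/π)^F`. -/
theorem What_pass_lower (n B' F : ℕ) [NeZero n]
    (hn : ∃ k, n = 2 ^ k) (hB' : ∃ k, B' = 2 ^ k)
    (hB2 : 2 ≤ B') (hBn : 2 * B' ≤ n) (hF2 : 2 ≤ F) (hFe : Even F)
    (f : ZMod n) (hf : (cdist n f : ℝ) ≤ (n : ℝ) / (2 * B')) :
    (2 / Real.pi) ^ F ≤ What n B' F f :=
  What_pass_lower_general n B' F hB' hB2 f hf
end

section
/- Let n be a power of two and let σ be chosen uniformly at random from the odd numbers in [n]; define π(i) = σ·i (mod n). Then π is an approximately pairwise-independent random permutation: for all distinct i, i' ∈ [n] and every integer t ≥ 0, ℙ_σ[|π(i) − π(i')| ≤ t] ≤ 4t/n, where |·| denotes the circular (modulo-n) distance. -/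
/-!
Put `d = i - i'`. Odd `σ` are units modulo `2 ^ k`, so `σ * d ≠ 0`. For any `d : ZMod n` of
additive order `q`, the map `σ ↦ σ * d` is at most `n / q`-to-one and lands in the multiples of
`g = n / q`; the nonzero multiples of `g` within circular distance `t` of `0` are
`±g, ±2g, …, ±⌊t/g⌋g`, so at most `g · 2⌊t/g⌋ ≤ 2t` elements `σ` have `σ * d ≠ 0` within
distance `t` of `0`. Dividing by the `n / 2` odd residues gives `4t/n`.
-/

open Finset

namespace ZMod

variable {n : ℕ} [NeZero n]

theorem dvd_val_of_nsmul_eq_zero {q : ℕ} (hq : q ∣ n) {x : ZMod n} (h : q • x = 0) :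
    n / q ∣ x.val := by
  have hdvd : n ∣ q * x.val := by
    rw [← natCast_eq_zero_iff, Nat.cast_mul, natCast_zmod_val, ← nsmul_eq_mul]
    exact h
  exact (Nat.div_dvd_iff_dvd_mul hq (Nat.pos_of_dvd_of_pos hq (NeZero.pos n))).2 hdvd

theorem card_filter_mul_eq_zero_le (d : ZMod n) :
    #{σ : ZMod n | σ * d = 0} ≤ n / addOrderOf d := by
  set q := addOrderOf d
  have hq : q ∣ n := card n ▸ addOrderOf_dvd_card
  calc #{σ : ZMod n | σ * d = 0}
      ≤ #((range (n / q)).image fun j => ((q * j : ℕ) : ZMod n)) := by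
        refine card_le_card fun σ hσ => ?_
        have hσd : σ.val • d = 0 := by
          rw [nsmul_eq_mul, natCast_zmod_val]
          exact (mem_filter_univ σ).1 hσ
        obtain ⟨j, hj⟩ := addOrderOf_dvd_iff_nsmul_eq_zero.2 hσd
        refine mem_image.2 ⟨j, mem_range.2 ?_, by rw [← hj, natCast_zmod_val]⟩
        exact (Nat.lt_div_iff_mul_lt' hq j).2 (hj ▸ σ.val_lt)
    _ ≤ n / q := card_image_le.trans (card_range _).le

theorem card_filter_ne_zero_dvd_val_cdist_le {g : ℕ} (hg : g ∣ n) (t : ℕ) :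
    #{x : ZMod n | x ≠ 0 ∧ g ∣ x.val ∧ cdist n x ≤ t} ≤ 2 * (t / g) := by
  set A := {m ∈ Ioc 0 t | g ∣ m}
  calc #{x : ZMod n | x ≠ 0 ∧ g ∣ x.val ∧ cdist n x ≤ t}
      ≤ #(A.image (fun m : ℕ => (m : ZMod n)) ∪ A.image (fun m : ℕ => -(m : ZMod n))) := by
        refine card_le_card fun x hx => ?_
        obtain ⟨hx0, hgx, hxt⟩ := (mem_filter_univ x).1 hx
        have hval : x.val ≠ 0 := (val_ne_zero x).2 hx0
        have hlt := x.val_lt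
        rcases min_le_iff.1 hxt with h | h
        · refine mem_union_left _ (mem_image.2 ⟨x.val, ?_, natCast_zmod_val x⟩)
          simp only [A, mem_filter, mem_Ioc]
          exact ⟨⟨Nat.pos_of_ne_zero hval, h⟩, hgx⟩
        · refine mem_union_right _ (mem_image.2 ⟨n - x.val, ?_, ?_⟩)
          · simp only [A, mem_filter, mem_Ioc]
            exact ⟨⟨Nat.sub_pos_of_lt hlt, h⟩, Nat.dvd_sub hg hgx⟩
          · rw [Nat.cast_sub hlt.le, natCast_self, natCast_zmod_val, zero_sub, neg_neg]
    _ ≤ #A + #A := (card_union_le _ _).trans (add_le_add card_image_le card_image_le)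
    _ = 2 * (t / g) := by rw [Nat.Ioc_filter_dvd_card_eq_div]; ring

theorem card_filter_mul_ne_zero_cdist_le (d : ZMod n) (t : ℕ) :
    #{σ : ZMod n | σ * d ≠ 0 ∧ cdist n (σ * d) ≤ t} ≤ 2 * t := by
  set q := addOrderOf d
  have hq : q ∣ n := card n ▸ addOrderOf_dvd_card
  set s : Finset (ZMod n) := {σ | σ * d ≠ 0 ∧ cdist n (σ * d) ≤ t}
  set T : Finset (ZMod n) := {x | x ≠ 0 ∧ n / q ∣ x.val ∧ cdist n x ≤ t}
  have hmaps : ∀ σ ∈ s, σ * d ∈ T := by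
    intro σ hσ
    obtain ⟨hσ0, hσt⟩ := (mem_filter_univ σ).1 hσ
    have hqσ : q • (σ * d) = 0 := by rw [← mul_smul_comm, addOrderOf_nsmul_eq_zero, mul_zero]
    exact (mem_filter_univ _).2 ⟨hσ0, dvd_val_of_nsmul_eq_zero hq hqσ, hσt⟩
  have hfiber : ∀ x, #{σ ∈ s | σ * d = x} ≤ n / q := by
    intro x
    rcases (filter (fun σ => σ * d = x) s).eq_empty_or_nonempty with h | ⟨σ₀, hσ₀⟩
    · simp [h]
    calc #{σ ∈ s | σ * d = x} ≤ #{σ : ZMod n | AddMonoidHom.mulRight d σ = x} :=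
          card_le_card fun σ hσ => mem_filter.2 ⟨mem_univ σ, (mem_filter.1 hσ).2⟩
      _ = #{σ : ZMod n | AddMonoidHom.mulRight d σ = 0} :=
          AddMonoidHom.card_fiber_eq_of_mem_range _ ⟨σ₀, (mem_filter.1 hσ₀).2⟩ ⟨0, zero_mul d⟩
      _ ≤ n / q := card_filter_mul_eq_zero_le d
  calc #s ≤ n / q * #T :=
        card_le_mul_card_image_of_maps_to hmaps _ fun x _ => hfiber x
    _ ≤ n / q * (2 * (t / (n / q))) :=
        Nat.mul_le_mul_left _ (card_filter_ne_zero_dvd_val_cdist_le (Nat.div_dvd_of_dvd hq) t)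
    _ ≤ 2 * t := by
        rw [Nat.mul_left_comm]
        exact Nat.mul_le_mul_left _ (Nat.mul_div_le t _)

theorem card_filter_val_odd : #{σ : ZMod n | σ.val % 2 = 1} = n / 2 := by
  rw [← Nat.card_multiples n 2]
  refine card_bij (fun σ _ => σ.val) (fun σ hσ => ?_) (fun σ _ τ _ h => val_injective n h)
    (fun m hm => ?_)
  · simp only [mem_filter_univ] at hσ
    simp only [mem_filter, mem_range]
    exact ⟨σ.val_lt, by omega⟩
  · simp only [mem_filter, mem_range] at hm
    exact ⟨m, by simp only [mem_filter_univ, val_cast_of_lt hm.1]; omega,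
      val_cast_of_lt hm.1⟩

theorem isUnit_of_val_odd {k : ℕ} {σ : ZMod (2 ^ k)} (h : σ.val % 2 = 1) : IsUnit σ := by
  rw [← natCast_zmod_val σ, isUnit_iff_coprime]
  exact Nat.Coprime.pow_right k (Nat.coprime_two_right.2 (Nat.odd_iff.2 h))

end ZMod

/-- For `n` a power of two and `σ` uniform over the odd numbers in `[n]`, the map
`π(i) = σ·i (mod n)` is approximately pairwise-independent: for all distinct `i, i'`
and every `t ≥ 0`, `ℙ_σ[|π(i) − π(i')| ≤ t] ≤ 4t/n` (circular distance). -/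
theorem mul_perm_approx_pairwise_independent (n : ℕ) [NeZero n]
    (hn : ∃ k, n = 2 ^ k) (i i' : ZMod n) (hii : i ≠ i') (t : ℕ) :
    ((Finset.univ.filter
        (fun σ : ZMod n => σ.val % 2 = 1 ∧ cdist n (σ * i - σ * i') ≤ t)).card : ℝ) /
      ((Finset.univ.filter (fun σ : ZMod n => σ.val % 2 = 1)).card : ℝ) ≤
      4 * t / n := by
  obtain ⟨k, rfl⟩ := hn
  have hodd_le : #{σ : ZMod (2 ^ k) | σ.val % 2 = 1 ∧ cdist (2 ^ k) (σ * i - σ * i') ≤ t}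
      ≤ #{σ : ZMod (2 ^ k) | σ * (i - i') ≠ 0 ∧ cdist (2 ^ k) (σ * (i - i')) ≤ t} := by
    refine card_le_card fun σ hσ => ?_
    obtain ⟨hodd, hσt⟩ := (mem_filter_univ σ).1 hσ
    refine (mem_filter_univ σ).2 ⟨?_, by rwa [mul_sub]⟩
    exact (ZMod.isUnit_of_val_odd hodd).mul_right_eq_zero.not.2 (sub_ne_zero.2 hii)
  have hcount : (#{σ : ZMod (2 ^ k) | σ.val % 2 = 1 ∧ cdist (2 ^ k) (σ * i - σ * i') ≤ t} : ℝ)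
      ≤ 2 * t :=
    mod_cast hodd_le.trans (ZMod.card_filter_mul_ne_zero_cdist_le (i - i') t)
  have hk : k ≠ 0 := by
    have : Nontrivial (ZMod (2 ^ k)) := ⟨⟨i, i', hii⟩⟩
    rintro rfl
    exact ZMod.nontrivial_iff.1 this rfl
  rw [ZMod.card_filter_val_odd, Nat.cast_div_charZero (dvd_pow_self 2 hk),
    div_le_div_iff₀ (by positivity) (by positivity)]
  push_cast
  nlinarith [pow_pos (two_pos (α := ℝ)) k]
end

section
/- Fix integers k0, k1 ≥ 1, a parameter δ ∈ (0, 1/20) with 10k0/δ a power of two, a parameter p ∈ (0, 1/2), and a vector γ ∈ ℝ^{2k1} with all entries positive. Let (r_1,q_1), …, (r_N,q_N) be i.i.d. samples from the budget-allocation distribution w, where N is a positive integer with N ≤ (10/δ)·k0·log₂(1/p). For each r ∈ [2k1] set s^r = 10·2^{max{q_i : r_i = r}} (with s^r = 0 if no i has r_i = r). Then E[ Σ_{r∈[2k1]} s^r ] ≤ 200·(k0/δ)·log₂(k0/δ)·log₂(1/p). -/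
open Finset

/-! Bound the budget pointwise by the sum over samples, `∑_r s^r ≤ ∑_i 10·2^{q_i}`, since each
`s^r` is one of the terms `10·2^{q_i}` with `r_i = r`. By linearity of expectation over i.i.d.
samples the right-hand side has expectation `N·E[10·2^q]`, and the factor `2^{-q}` of `w` makes
`E[10·2^q] = 10Q/(1 - δ/(10k0))`. With `N ≤ 10(k0/δ)·log₂(1/p)` and
`Q = log₂ 10 + log₂(k0/δ)`, what remains is the numerical inequality
`10Q/(1 - 2^{-Q}) ≤ 20·log₂(k0/δ)`, which holds as soon as `2^Q > 200`
since `log₂ 10 < 7/2`. -/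

section Expectation

variable {ι α : Type*} [Fintype ι] [DecidableEq ι] [Fintype α]

theorem sum_pi_prod_mul_apply {R : Type*} [CommSemiring R] (p g : α → R)
    (hp : ∑ x, p x = 1) (i : ι) :
    ∑ ω : ι → α, (∏ j, p (ω j)) * g (ω i) = ∑ x, p x * g x := by
  have hsummand : ∀ ω : ι → α,
      (∏ j, p (ω j)) * g (ω i) = ∏ j, p (ω j) * if j = i then g (ω j) else 1 := by
    intro ω
    rw [prod_mul_distrib, prod_ite_eq', if_pos (mem_univ i)]
  have hfactor : ∀ j, (∑ x, p x * if j = i then g x else 1) =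
      if j = i then ∑ x, p x * g x else 1 := by
    intro j
    split_ifs <;> simp [hp]
  rw [sum_congr rfl fun ω _ => hsummand ω,
    ← Fintype.prod_sum fun j x => p x * if j = i then g x else 1]
  simp only [hfactor, prod_ite_eq', if_pos (mem_univ i)]

theorem sum_pi_prod_mul_sum_apply {R : Type*} [CommSemiring R] (p g : α → R)
    (hp : ∑ x, p x = 1) :
    ∑ ω : ι → α, (∏ j, p (ω j)) * ∑ i, g (ω i) = Fintype.card ι * ∑ x, p x * g x := by
  simp only [mul_sum]
  rw [sum_comm]
  simp only [sum_pi_prod_mul_apply p g hp, sum_const, card_univ, nsmul_eq_mul,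
    mul_sum]

end Expectation

theorem sum_fiber_sup_le_sum {ι β γ R : Type*} [Fintype ι] [Fintype β] [DecidableEq β]
    [LinearOrder γ] [OrderBot γ] [AddCommMonoid R] [PartialOrder R] [IsOrderedAddMonoid R]
    (r : ι → β) (q : ι → γ) (u : γ → R) (hu : ∀ a, 0 ≤ u a) :
    ∑ b, (if (univ.filter fun i => r i = b).Nonempty then
        u ((univ.filter fun i => r i = b).sup q) else 0) ≤ ∑ i, u (q i) := by
  rw [← sum_fiberwise univ r (fun i => u (q i))]
  refine sum_le_sum fun b _ => ?_
  split_ifs with hb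
  · obtain ⟨i, hi, hsup⟩ := exists_mem_eq_sup _ hb q
    rw [hsup]
    exact single_le_sum (f := fun i => u (q i)) (fun i _ => hu (q i)) hi
  · exact sum_nonneg fun i _ => hu (q i)

theorem sum_pi_prod_mul_sum_fiber_sup_le {ι α β : Type*} [Fintype ι] [DecidableEq ι] [Fintype α]
    [Fintype β] [DecidableEq β] (w : α → ℝ) (hw0 : ∀ x, 0 ≤ w x) (hw1 : ∑ x, w x = 1)
    (r : α → β) (q : α → ℕ) (u : ℕ → ℝ) (hu : ∀ n, 0 ≤ u n) :
    ∑ ω : ι → α, (∏ i, w (ω i)) *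
        ∑ b, (if (univ.filter fun i => r (ω i) = b).Nonempty then
          u ((univ.filter fun i => r (ω i) = b).sup fun i => q (ω i)) else 0) ≤
      Fintype.card ι * ∑ x, w x * u (q x) := by
  rw [← sum_pi_prod_mul_sum_apply w (fun x => u (q x)) hw1]
  refine sum_le_sum fun ω _ => mul_le_mul_of_nonneg_left ?_ (prod_nonneg fun i _ => hw0 (ω i))
  exact sum_fiber_sup_le_sum (fun i => r (ω i)) (fun i => q (ω i)) u hu

/-- `w_q^r` at `x = (r, q - 1)`: `Fin Q` stores `q - 1`, so `q = x.2 + 1` ranges over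
`{1, …, Q}`. -/
noncomputable def budgetWeight {β : Type*} [Fintype β] {Q : ℕ} (ε : ℝ) (γ : β → ℝ)
    (x : β × Fin Q) : ℝ :=
  2 ^ (-((x.2.val : ℤ) + 1)) / (1 - ε) * (γ x.1 / ∑ r, γ r)

section BudgetWeight

variable {β : Type*} [Fintype β] {Q : ℕ} (γ : β → ℝ)

theorem budgetWeight_nonneg {ε : ℝ} (hε : ε ≤ 1) (hγ : ∀ r, 0 ≤ γ r) (x : β × Fin Q) :
    0 ≤ budgetWeight ε γ x :=
  mul_nonneg (div_nonneg (zpow_nonneg zero_le_two _) (sub_nonneg.mpr hε))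
    (div_nonneg (hγ x.1) (sum_nonneg fun r _ => hγ r))

theorem sum_range_inv_two_pow_succ (n : ℕ) :
    ∑ k ∈ range n, ((2 : ℝ) ^ (k + 1))⁻¹ = 1 - (2 ^ n)⁻¹ := by
  induction n with
  | zero => simp
  | succ n ih =>
    rw [sum_range_succ, ih, pow_succ]
    field_simp
    ring

theorem budgetWeight_eq (ε : ℝ) (x : β × Fin Q) :
    budgetWeight ε γ x = ((2 : ℝ) ^ (x.2.val + 1))⁻¹ * ((γ x.1 / ∑ r, γ r) / (1 - ε)) := by
  have h : (2 : ℝ) ^ (-((x.2.val : ℤ) + 1)) = ((2 : ℝ) ^ (x.2.val + 1))⁻¹ := zpow_negSucc 2 _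
  rw [budgetWeight, h]
  ring

theorem sum_budgetWeight (hQ : Q ≠ 0) (hγ : ∑ r, γ r ≠ 0) :
    ∑ x : β × Fin Q, budgetWeight (2 ^ Q)⁻¹ γ x = 1 := by
  have hgeom : ∑ q : Fin Q, ((2 : ℝ) ^ (q.val + 1))⁻¹ = 1 - (2 ^ Q)⁻¹ := by
    rw [Fin.sum_univ_eq_sum_range (fun k => ((2 : ℝ) ^ (k + 1))⁻¹), sum_range_inv_two_pow_succ]
  have hQ' : (1 : ℝ) - (2 ^ Q)⁻¹ ≠ 0 := by
    rw [sub_ne_zero, ne_comm, inv_ne_one]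
    exact (one_lt_pow₀ (by norm_num) hQ).ne'
  simp only [budgetWeight_eq, Fintype.sum_prod_type, ← sum_mul, hgeom, ← mul_sum, ← sum_div]
  rw [div_self hγ, mul_one_div_cancel hQ']

theorem sum_budgetWeight_mul_two_pow (ε : ℝ) (hγ : ∑ r, γ r ≠ 0) :
    ∑ x : β × Fin Q, budgetWeight ε γ x * 2 ^ (x.2.val + 1) = Q / (1 - ε) := by
  have hcancel : ∀ x : β × Fin Q,
      budgetWeight ε γ x * 2 ^ (x.2.val + 1) = (γ x.1 / ∑ r, γ r) / (1 - ε) := by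
    intro x
    rw [budgetWeight_eq, mul_comm, ← mul_assoc, mul_inv_cancel₀ (by positivity), one_mul]
  simp only [hcancel, Fintype.sum_prod_type, sum_const, card_univ, Fintype.card_fin, nsmul_eq_mul,
    ← mul_sum, ← sum_div]
  field_simp

end BudgetWeight

theorem logb_two_ten_lt : Real.logb 2 10 < 7 / 2 := by
  have h : Real.logb 2 (10 ^ 2) < Real.logb 2 (2 ^ 7) :=
    Real.logb_lt_logb (by norm_num) (by norm_num) (by norm_num)
  rw [Real.logb_pow, Real.logb_pow, Real.logb_self_eq_one (by norm_num)] at h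
  push_cast at h
  linarith

theorem ten_mul_div_one_sub_inv_two_pow_le {A : ℝ} {Q : ℕ} (hA : 20 < A)
    (hQ : (2 : ℝ) ^ Q = 10 * A) :
    10 * Q / (1 - (2 ^ Q)⁻¹) ≤ 20 * Real.logb 2 A := by
  have hQ8 : (8 : ℝ) ≤ Q := by
    have h : (2 : ℝ) ^ 7 < 2 ^ Q := by rw [hQ]; linarith
    exact_mod_cast (pow_lt_pow_iff_right₀ (by norm_num)).mp h
  have hlogA : Real.logb 2 A = Q - Real.logb 2 10 := by
    have h := congrArg (Real.logb 2) hQ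
    rw [Real.logb_pow, Real.logb_self_eq_one (by norm_num),
      Real.logb_mul (by norm_num) (by linarith)] at h
    linarith
  have hε : ((2 : ℝ) ^ Q)⁻¹ ≤ 1 / 200 := by
    rw [hQ, inv_le_comm₀ (by linarith) (by norm_num)]
    linarith
  rw [div_le_iff₀ (by linarith), hlogA]
  nlinarith [logb_two_ten_lt, mul_nonneg (sub_nonneg.mpr hε) (by linarith [logb_two_ten_lt] :
    (0 : ℝ) ≤ Q - Real.logb 2 10)]

theorem budget_allocation_expected_budget_general (k0 k1 Q N : ℕ) [NeZero (2 * k1)]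
    (hk0 : 1 ≤ k0) (δ p : ℝ)
    (hδ : δ ∈ Set.Ioo (0 : ℝ) (1 / 20)) (hQ : (2 : ℝ) ^ Q = 10 * k0 / δ)
    (γ : ZMod (2 * k1) → ℝ) (hγ : ∀ r, 0 < γ r)
    (hNle : (N : ℝ) ≤ 10 / δ * k0 * Real.logb 2 (1 / p)) :
    ∑ ω : Fin N → ZMod (2 * k1) × Fin Q,
        (∏ i : Fin N,
          (2 : ℝ) ^ (-(((ω i).2.val : ℤ) + 1)) / (1 - δ / (10 * k0)) *
            (γ (ω i).1 / ∑ r' : ZMod (2 * k1), γ r')) *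
        (∑ r : ZMod (2 * k1),
          if (Finset.univ.filter (fun i : Fin N => (ω i).1 = r)).Nonempty then
            ((10 * 2 ^ ((Finset.univ.filter (fun i : Fin N => (ω i).1 = r)).sup
              (fun i => (ω i).2.val + 1)) : ℕ) : ℝ)
          else 0) ≤
      200 * (k0 / δ) * Real.logb 2 (k0 / δ) * Real.logb 2 (1 / p) := by
  obtain ⟨hδ0, hδ20⟩ := hδ
  have hA : 20 < (k0 : ℝ) / δ := by
    rw [lt_div_iff₀ hδ0]
    nlinarith [(by exact_mod_cast hk0 : (1 : ℝ) ≤ k0)]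
  have hQA : (2 : ℝ) ^ Q = 10 * (k0 / δ) := by rw [hQ, mul_div_assoc]
  have hε : δ / (10 * k0) = (2 ^ Q)⁻¹ := by rw [hQ, inv_div]
  have hQ0 : Q ≠ 0 := by
    rintro rfl
    norm_num at hQA
    linarith
  have hS : 0 < ∑ r, γ r := sum_pos (fun r _ => hγ r) univ_nonempty
  have hNle' : (N : ℝ) ≤ 10 * (k0 / δ) * Real.logb 2 (1 / p) := hNle.trans_eq (by ring)
  have hε1 : ((2 : ℝ) ^ Q)⁻¹ ≤ 1 := inv_le_one_of_one_le₀ (one_le_pow₀ one_le_two)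
  rw [hε]
  calc _ ≤ N * ∑ x, budgetWeight (2 ^ Q)⁻¹ γ x * ((10 * 2 ^ (x.2.val + 1) : ℕ) : ℝ) := by
        refine (sum_pi_prod_mul_sum_fiber_sup_le (budgetWeight (2 ^ Q)⁻¹ γ)
          (budgetWeight_nonneg γ hε1 fun r => (hγ r).le) (sum_budgetWeight γ hQ0 hS.ne')
          Prod.fst (fun x => x.2.val + 1) (fun n => ((10 * 2 ^ n : ℕ) : ℝ))
          fun n => Nat.cast_nonneg _).trans_eq ?_
        rw [Fintype.card_fin]
    _ = N * (10 * Q / (1 - (2 ^ Q)⁻¹)) := by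
        simp only [Nat.cast_mul, Nat.cast_pow, Nat.cast_ofNat, mul_left_comm _ (10 : ℝ), ← mul_sum]
        rw [sum_budgetWeight_mul_two_pow γ _ hS.ne']
        ring
    _ ≤ 10 * (k0 / δ) * Real.logb 2 (1 / p) * (20 * Real.logb 2 (k0 / δ)) :=
        mul_le_mul hNle' (ten_mul_div_one_sub_inv_two_pow_le hA hQA)
          (div_nonneg (by positivity) (sub_nonneg.mpr hε1))
          (le_trans (Nat.cast_nonneg N) hNle')
    _ = 200 * (k0 / δ) * Real.logb 2 (k0 / δ) * Real.logb 2 (1 / p) := by ring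

/-- Expected total budget of the budget-allocation procedure: `N` i.i.d. samples
`(r_i, q_i)` are drawn from the distribution `w_q^r = (2^{−q}/(1 − δ/(10k0)))·γ^r/‖γ‖₁`
on `[2k1] × {1,…,Q}` (here `q_i = (ω i).2.val + 1 ∈ {1,…,Q}`), and
`s^r = 10·2^{max{q_i : r_i = r}}` (with `s^r = 0` if no sample has `r_i = r`). Then
`E[∑_r s^r] ≤ 200·(k0/δ)·log₂(k0/δ)·log₂(1/p)`. -/
theorem budget_allocation_expected_budget (k0 k1 Q N : ℕ) [NeZero (2 * k1)]
    (hk0 : 1 ≤ k0) (hk1 : 1 ≤ k1) (δ p : ℝ)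
    (hδ : δ ∈ Set.Ioo (0 : ℝ) (1 / 20)) (hQ : (2 : ℝ) ^ Q = 10 * k0 / δ)
    (hp : p ∈ Set.Ioo (0 : ℝ) (1 / 2))
    (γ : ZMod (2 * k1) → ℝ) (hγ : ∀ r, 0 < γ r)
    (hN : 0 < N) (hNle : (N : ℝ) ≤ 10 / δ * k0 * Real.logb 2 (1 / p)) :
    ∑ ω : Fin N → ZMod (2 * k1) × Fin Q,
        (∏ i : Fin N,
          (2 : ℝ) ^ (-(((ω i).2.val : ℤ) + 1)) / (1 - δ / (10 * k0)) *
            (γ (ω i).1 / ∑ r' : ZMod (2 * k1), γ r')) *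
        (∑ r : ZMod (2 * k1),
          if (Finset.univ.filter (fun i : Fin N => (ω i).1 = r)).Nonempty then
            ((10 * 2 ^ ((Finset.univ.filter (fun i : Fin N => (ω i).1 = r)).sup
              (fun i => (ω i).2.val + 1)) : ℕ) : ℝ)
          else 0) ≤
      200 * (k0 / δ) * Real.logb 2 (k0 / δ) * Real.logb 2 (1 / p) :=
  budget_allocation_expected_budget_general k0 k1 Q N hk0 δ p hδ hQ γ hγ hNle
end
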